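/- The group ⟨x₁⟩ ⊕ ⟨x₂, x₃ | (x₂x₃)² = (x₃x₂)²⟩, i.e., the direct product of ℤ with ⟨x₂, x₃ | (x₂x₃)² = (x₃x₂)²⟩, contains a free subgroup of rank 2. -/

import Mathlib

set_option linter.unnecessarySeqFocus false

open Pointwise

noncomputable section PingPongAux18

/-- The plane minus the origin. -/
abbrev Vnz18 := {v : ℝ × ℝ // v ≠ 0}

/-- The shear `(x, y) ↦ (x + 2y, y)` on the plane. -/
def eA18 : Equiv.Perm (ℝ × ℝ) where
  toFun p := (p.1 + 2 * p.2, p.2)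
  invFun p := (p.1 - 2 * p.2, p.2)
  left_inv p := by cases p; simp
  right_inv p := by cases p; simp

/-- Rotation by 90 degrees: `(x, y) ↦ (y, -x)`. -/
def eS18 : Equiv.Perm (ℝ × ℝ) where
  toFun p := (p.2, -p.1)
  invFun p := (-p.2, p.1)
  left_inv p := by cases p; simp
  right_inv p := by cases p; simp

lemma eA18_ne (x : ℝ × ℝ) : x ≠ 0 ↔ eA18 x ≠ 0 := by
  cases x with
  | mk a b =>
    simp only [eA18, Equiv.coe_fn_mk, ne_eq, Prod.ext_iff, Prod.fst_zero, Prod.snd_zero]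
    constructor
    · intro h h2
      exact h ⟨by linarith [h2.1, h2.2], h2.2⟩
    · intro h h2
      exact h ⟨by rw [h2.1, h2.2]; ring, h2.2⟩

lemma eS18_ne (x : ℝ × ℝ) : x ≠ 0 ↔ eS18 x ≠ 0 := by
  cases x with
  | mk a b =>
    simp only [eS18, Equiv.coe_fn_mk, ne_eq, Prod.ext_iff, Prod.fst_zero, Prod.snd_zero]
    constructor
    · intro h h2; exact h ⟨by linarith [h2.2], h2.1⟩
    · intro h h2; exact h ⟨h2.2, by rw [h2.1]; ring⟩

/-- The shear as a permutation of the punctured plane. -/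
def pA18 : Equiv.Perm Vnz18 := eA18.subtypePerm (fun x => (eA18_ne x).symm)

/-- The rotation as a permutation of the punctured plane. -/
def pS18 : Equiv.Perm Vnz18 := eS18.subtypePerm (fun x => (eS18_ne x).symm)

lemma pA18_apply (v : Vnz18) : ((pA18 v : Vnz18) : ℝ × ℝ) = (v.1.1 + 2 * v.1.2, v.1.2) := rfl

lemma pA18_inv_apply (v : Vnz18) :
    ((pA18⁻¹ v : Vnz18) : ℝ × ℝ) = (v.1.1 - 2 * v.1.2, v.1.2) := by
  rw [pA18, Equiv.Perm.inv_subtypePerm]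
  rfl

lemma pS18_apply (v : Vnz18) : ((pS18 v : Vnz18) : ℝ × ℝ) = (v.1.2, -v.1.1) := rfl

lemma pS18_inv_apply (v : Vnz18) : ((pS18⁻¹ v : Vnz18) : ℝ × ℝ) = (-v.1.2, v.1.1) := by
  rw [pS18, Equiv.Perm.inv_subtypePerm]
  rfl

lemma key_comm18 : pS18 * pS18 * pA18 = pA18 * (pS18 * pS18) := by
  ext v <;> simp only [Equiv.Perm.mul_apply, pA18_apply, pS18_apply] <;> ring

/-- The conjugate `S A S⁻¹`, which acts as `(x, y) ↦ (x, y - 2x)`. -/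
def pB18 : Equiv.Perm Vnz18 := pS18 * pA18 * pS18⁻¹

lemma pB18_apply (v : Vnz18) : ((pB18 v : Vnz18) : ℝ × ℝ) = (v.1.1, v.1.2 - 2 * v.1.1) := by
  simp only [pB18, Equiv.Perm.mul_apply, pS18_apply, pA18_apply, pS18_inv_apply]
  exact Prod.ext_iff.mpr ⟨rfl, by ring⟩

lemma pB18_inv_apply (v : Vnz18) :
    ((pB18⁻¹ v : Vnz18) : ℝ × ℝ) = (v.1.1, v.1.2 + 2 * v.1.1) := by
  have h : pB18⁻¹ = pS18 * pA18⁻¹ * pS18⁻¹ := by rw [pB18]; group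
  rw [h]
  simp only [Equiv.Perm.mul_apply, pS18_apply, pA18_inv_apply, pS18_inv_apply]
  exact Prod.ext_iff.mpr ⟨rfl, by ring⟩

lemma stepA18 (x y : ℝ) (h : |x| ≤ |y| ∨ 0 ≤ x*y) : |y| ≤ |x+2*y| ∧ 0 ≤ (x+2*y)*y := by
  rcases abs_cases x with ⟨h1,h2⟩|⟨h1,h2⟩ <;> rcases abs_cases y with ⟨h3,h4⟩|⟨h3,h4⟩ <;>
    rcases abs_cases (x+2*y) with ⟨h5,h6⟩|⟨h5,h6⟩ <;> rcases h with h|h <;>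
    constructor <;> nlinarith [sq_nonneg x, sq_nonneg y]

lemma stepAinv18 (x y : ℝ) (h : |x| < |y| ∨ x*y < 0) : |y| < |x-2*y| ∧ (x-2*y)*y < 0 := by
  rcases abs_cases x with ⟨h1,h2⟩|⟨h1,h2⟩ <;> rcases abs_cases y with ⟨h3,h4⟩|⟨h3,h4⟩ <;>
    rcases abs_cases (x-2*y) with ⟨h5,h6⟩|⟨h5,h6⟩ <;> rcases h with h|h <;>
    constructor <;> nlinarith [sq_nonneg x, sq_nonneg y]

lemma stepB18 (x y : ℝ) (h : |y| ≤ |x| ∨ x*y ≤ 0) : |x| ≤ |y-2*x| ∧ x*(y-2*x) ≤ 0 := by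
  rcases abs_cases x with ⟨h1,h2⟩|⟨h1,h2⟩ <;> rcases abs_cases y with ⟨h3,h4⟩|⟨h3,h4⟩ <;>
    rcases abs_cases (y-2*x) with ⟨h5,h6⟩|⟨h5,h6⟩ <;> rcases h with h|h <;>
    constructor <;> nlinarith [sq_nonneg x, sq_nonneg y]

lemma stepBinv18 (x y : ℝ) (h : |y| < |x| ∨ 0 < x*y) : |x| < |y+2*x| ∧ 0 < x*(y+2*x) := by
  rcases abs_cases x with ⟨h1,h2⟩|⟨h1,h2⟩ <;> rcases abs_cases y with ⟨h3,h4⟩|⟨h3,h4⟩ <;>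
    rcases abs_cases (y+2*x) with ⟨h5,h6⟩|⟨h5,h6⟩ <;> rcases h with h|h <;>
    constructor <;> nlinarith [sq_nonneg x, sq_nonneg y]

def X018 : Set Vnz18 := {v | |v.1.2| ≤ |v.1.1| ∧ 0 ≤ v.1.1 * v.1.2}
def X118 : Set Vnz18 := {v | |v.1.1| ≤ |v.1.2| ∧ v.1.1 * v.1.2 ≤ 0}
def Y018 : Set Vnz18 := {v | |v.1.2| < |v.1.1| ∧ v.1.1 * v.1.2 < 0}
def Y118 : Set Vnz18 := {v | |v.1.1| < |v.1.2| ∧ 0 < v.1.1 * v.1.2}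

lemma vnz_ne18 (v : Vnz18) (h1 : v.1.1 = 0) (h2 : v.1.2 = 0) : False := by
  apply v.2
  rw [Prod.ext_iff]
  exact ⟨by simpa using h1, by simpa using h2⟩

lemma dX01 : Disjoint X018 X118 := by
  rw [Set.disjoint_left]
  rintro v ⟨a1, a2⟩ ⟨b1, b2⟩
  have hxy : v.1.1 * v.1.2 = 0 := le_antisymm b2 a2
  rcases mul_eq_zero.mp hxy with h | h
  · refine vnz_ne18 v h ?_
    rw [h, abs_zero] at a1 b1
    exact abs_eq_zero.mp (le_antisymm a1 (abs_nonneg _))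
  · refine vnz_ne18 v ?_ h
    rw [h, abs_zero] at a1 b1
    exact abs_eq_zero.mp (le_antisymm b1 (abs_nonneg _))

lemma dY01 : Disjoint Y018 Y118 := by
  rw [Set.disjoint_left]; rintro v ⟨a1, a2⟩ ⟨b1, b2⟩; linarith

lemma dX0Y0 : Disjoint X018 Y018 := by
  rw [Set.disjoint_left]; rintro v ⟨a1, a2⟩ ⟨b1, b2⟩; linarith

lemma dX0Y1 : Disjoint X018 Y118 := by
  rw [Set.disjoint_left]; rintro v ⟨a1, a2⟩ ⟨b1, b2⟩; linarith

lemma dX1Y0 : Disjoint X118 Y018 := by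
  rw [Set.disjoint_left]; rintro v ⟨a1, a2⟩ ⟨b1, b2⟩; linarith

lemma dX1Y1 : Disjoint X118 Y118 := by
  rw [Set.disjoint_left]; rintro v ⟨a1, a2⟩ ⟨b1, b2⟩; linarith

lemma hXa : pA18 • Y018ᶜ ⊆ X018 := by
  intro u hu
  rw [Set.mem_smul_set] at hu
  obtain ⟨v, hv, rfl⟩ := hu
  rw [Set.mem_compl_iff, Y018, Set.mem_setOf_eq, not_and_or, not_lt, not_lt] at hv
  show |((pA18 v : Vnz18) : ℝ × ℝ).2| ≤ |((pA18 v : Vnz18) : ℝ × ℝ).1| ∧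
    0 ≤ ((pA18 v : Vnz18) : ℝ × ℝ).1 * ((pA18 v : Vnz18) : ℝ × ℝ).2
  rw [pA18_apply]
  exact stepA18 v.1.1 v.1.2 hv

lemma hYa : pA18⁻¹ • X018ᶜ ⊆ Y018 := by
  intro u hu
  rw [Set.mem_smul_set] at hu
  obtain ⟨v, hv, rfl⟩ := hu
  rw [Set.mem_compl_iff, X018, Set.mem_setOf_eq, not_and_or, not_le, not_le] at hv
  show |((pA18⁻¹ v : Vnz18) : ℝ × ℝ).2| < |((pA18⁻¹ v : Vnz18) : ℝ × ℝ).1| ∧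
    ((pA18⁻¹ v : Vnz18) : ℝ × ℝ).1 * ((pA18⁻¹ v : Vnz18) : ℝ × ℝ).2 < 0
  rw [pA18_inv_apply]
  exact stepAinv18 v.1.1 v.1.2 hv

lemma hXb : pB18 • Y118ᶜ ⊆ X118 := by
  intro u hu
  rw [Set.mem_smul_set] at hu
  obtain ⟨v, hv, rfl⟩ := hu
  rw [Set.mem_compl_iff, Y118, Set.mem_setOf_eq, not_and_or, not_lt, not_lt] at hv
  show |((pB18 v : Vnz18) : ℝ × ℝ).1| ≤ |((pB18 v : Vnz18) : ℝ × ℝ).2| ∧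
    ((pB18 v : Vnz18) : ℝ × ℝ).1 * ((pB18 v : Vnz18) : ℝ × ℝ).2 ≤ 0
  rw [pB18_apply]
  exact stepB18 v.1.1 v.1.2 hv

lemma hYb : pB18⁻¹ • X118ᶜ ⊆ Y118 := by
  intro u hu
  rw [Set.mem_smul_set] at hu
  obtain ⟨v, hv, rfl⟩ := hu
  rw [Set.mem_compl_iff, X118, Set.mem_setOf_eq, not_and_or, not_le, not_le] at hv
  show |((pB18⁻¹ v : Vnz18) : ℝ × ℝ).1| < |((pB18⁻¹ v : Vnz18) : ℝ × ℝ).2| ∧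
    0 < ((pB18⁻¹ v : Vnz18) : ℝ × ℝ).1 * ((pB18⁻¹ v : Vnz18) : ℝ × ℝ).2
  rw [pB18_inv_apply]
  exact stepBinv18 v.1.1 v.1.2 hv

/-- The pair of permutations generating a free subgroup. -/
def a18 : Fin 2 → Equiv.Perm Vnz18 := ![pA18, pB18]

lemma freeInj18 : Function.Injective (FreeGroup.lift a18) := by
  apply FreeGroup.injective_lift_of_ping_pong a18 ![X018, X118] ![Y018, Y118]
  · intro i
    fin_cases i
    · exact ⟨⟨(1, 0), by norm_num [Prod.ext_iff]⟩, by constructor <;> norm_num⟩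
    · exact ⟨⟨(0, 1), by norm_num [Prod.ext_iff]⟩, by constructor <;> norm_num⟩
  · intro i j hij
    fin_cases i <;> fin_cases j <;>
      first
        | exact absurd rfl hij
        | exact dX01
        | exact dX01.symm
  · intro i j hij
    fin_cases i <;> fin_cases j <;>
      first
        | exact absurd rfl hij
        | exact dY01
        | exact dY01.symm
  · intro i j
    fin_cases i <;> fin_cases j <;>
      first
        | exact dX0Y0
        | exact dX0Y1
        | exact dX1Y0
        | exact dX1Y1
  · intro i
    fin_cases i
    · exact hXa
    · exact hXb
  · intro i
    fin_cases i
    · exact hYa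
    · exact hYb

/-- The defining function for the presented group homomorphism. -/
def f18 : Bool → Equiv.Perm Vnz18 := fun b => if b then pA18 else pA18⁻¹ * pS18

lemma hrel18 :
    ∀ r ∈ ({(FreeGroup.of true * FreeGroup.of false) ^ 2 *
        ((FreeGroup.of false * FreeGroup.of true) ^ 2)⁻¹} : Set (FreeGroup Bool)),
      FreeGroup.lift f18 r = 1 := by
  intro r hr
  rw [Set.mem_singleton_iff] at hr
  subst hr
  rw [map_mul, map_inv, map_pow, map_pow, map_mul, map_mul, FreeGroup.lift_apply_of,
    FreeGroup.lift_apply_of]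
  have ht : f18 true = pA18 := rfl
  have hf : f18 false = pA18⁻¹ * pS18 := rfl
  rw [ht, hf, mul_inv_eq_one, mul_inv_cancel_left, sq, sq]
  have h1 : pA18⁻¹ * pS18 * pA18 * (pA18⁻¹ * pS18 * pA18) = pA18⁻¹ * (pS18 * pS18 * pA18) := by
    group
  rw [h1, key_comm18, inv_mul_cancel_left]

end PingPongAux18

/-- The direct product of `ℤ` with `⟨x₂, x₃ | (x₂x₃)² = (x₃x₂)²⟩` contains a free
subgroup of rank 2. -/
theorem stmt_18 :
    ∃ g : FreeGroup (Fin 2) →*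
        (Multiplicative ℤ) ×
          PresentedGroup
            ({(FreeGroup.of true * FreeGroup.of false) ^ 2 *
                ((FreeGroup.of false * FreeGroup.of true) ^ 2)⁻¹} : Set (FreeGroup Bool)),
      Function.Injective g := by
  classical
  set rels : Set (FreeGroup Bool) :=
    {(FreeGroup.of true * FreeGroup.of false) ^ 2 *
        ((FreeGroup.of false * FreeGroup.of true) ^ 2)⁻¹} with hrels
  -- the two elements of the presented group generating a free subgroup
  let t : PresentedGroup rels := PresentedGroup.of true * PresentedGroup.of false
  let w : Fin 2 → PresentedGroup rels :=
    ![PresentedGroup.of true, t * PresentedGroup.of true * t⁻¹]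
  refine ⟨FreeGroup.lift fun i => ((1 : Multiplicative ℤ), w i), ?_⟩
  -- the homomorphism from the presented group to permutations
  let φ : PresentedGroup rels →* Equiv.Perm Vnz18 := PresentedGroup.toGroup hrel18
  have hφt : φ t = pS18 := by
    show φ (PresentedGroup.of true * PresentedGroup.of false) = pS18
    rw [map_mul, PresentedGroup.toGroup.of, PresentedGroup.toGroup.of]
    show pA18 * (pA18⁻¹ * pS18) = pS18
    rw [mul_inv_cancel_left]
  have hχ : (φ.comp ((MonoidHom.snd (Multiplicative ℤ) (PresentedGroup rels)).comp
      (FreeGroup.lift fun i => ((1 : Multiplicative ℤ), w i)))) = FreeGroup.lift a18 := by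
    apply FreeGroup.ext_hom
    intro i
    simp only [MonoidHom.comp_apply, FreeGroup.lift_apply_of, MonoidHom.coe_snd]
    fin_cases i
    · show φ (w 0) = a18 0
      show φ (PresentedGroup.of true) = pA18
      rw [PresentedGroup.toGroup.of]
      rfl
    · show φ (w 1) = a18 1
      show φ (t * PresentedGroup.of true * t⁻¹) = pB18
      rw [map_mul, map_mul, map_inv, hφt, PresentedGroup.toGroup.of]
      rfl
  have : Function.Injective (φ.comp ((MonoidHom.snd (Multiplicative ℤ)
      (PresentedGroup rels)).comp (FreeGroup.lift fun i => ((1 : Multiplicative ℤ), w i)))) := by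
    rw [hχ]
    exact freeInj18
  exact Function.Injective.of_comp (f := φ ∘ (MonoidHom.snd _ _)) this
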